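/- There exists an LDQL query q(?x) with single free variable ?x that is not equivalent to any NautiLOD expression. Concretely: for any URI p and variable ?x, the LDQL query q(?x) = ⟨⟨+,p,*⟩,(?x,?x,?x)⟩ is such that no NautiLOD expression n satisfies, for every Web of Linked Data W=(D,adoc) and all URIs u,u' with u ∈ dom(adoc): u' ∈ ⟦n⟧_W^u if and only if {?x↦u'} ∈ ⟦q(?x)⟧_W^{{u}}. -/
import Mathlib


namespace LDQLFormal

noncomputable section
open Classical

/-! ### Basic RDF model -/

abbrev URI := ℕ
abbrev BNodeId := ℕ
abbrev LitId := ℕ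
abbrev Var := ℕ
abbrev Doc := ℕ

/-- Subject terms: URIs or blank nodes. -/
inductive Subj where
  | uri (u : URI)
  | bnode (b : BNodeId)
deriving DecidableEq

/-- RDF terms (objects): URIs, blank nodes, or literals. -/
inductive Obj where
  | uri (u : URI)
  | bnode (b : BNodeId)
  | lit (l : LitId)
deriving DecidableEq

structure RDFTriple where
  s : Subj
  p : URI
  o : Obj
deriving DecidableEq

def Subj.toObj : Subj → Obj
  | .uri u => .uri u
  | .bnode b => .bnode b

/-- The set of URIs occurring in an RDF triple. -/
def urisOf (t : RDFTriple) : Set URI :=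
  {u | t.s = .uri u ∨ t.p = u ∨ t.o = .uri u}

/-- A Web of Linked Data: a finite set of documents, the data in each
document (a finite set of RDF triples), and a surjective partial function
`adoc` from URIs to documents. -/
structure Web where
  docs : Set Doc
  finite_docs : docs.Finite
  data : Doc → Finset RDFTriple
  adoc : URI → Option Doc
  adoc_mem : ∀ u d, adoc u = some d → d ∈ docs
  adoc_surj : ∀ d ∈ docs, ∃ u, adoc u = some d

/-- Link graph edge `(d, (t,u), d')`. -/
def Web.edge (W : Web) (d : Doc) (t : RDFTriple) (u : URI) (d' : Doc) : Prop :=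
  d ∈ W.docs ∧ t ∈ W.data d ∧ u ∈ urisOf t ∧ W.adoc u = some d'

/-! ### Link patterns -/

/-- Components of a link pattern drawn from `U ∪ {*, +}`. -/
inductive LPUP where
  | uri (u : URI)
  | star
  | plus
deriving DecidableEq

/-- Components of a link pattern drawn from `U ∪ Lit ∪ {*, +}`. -/
inductive LPULP where
  | uri (u : URI)
  | lit (l : LitId)
  | star
  | plus
deriving DecidableEq

structure LinkPattern where
  c1 : LPUP
  c2 : LPUP
  c3 : LPULP

def matchSubj (y : LPUP) (uctx : URI) (x : Subj) : Prop :=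
  match y with
  | .uri w => x = .uri w
  | .star => True
  | .plus => x = .uri uctx

def matchPred (y : LPUP) (uctx : URI) (x : URI) : Prop :=
  match y with
  | .uri w => x = w
  | .star => True
  | .plus => x = uctx

def matchObj (y : LPULP) (uctx : URI) (x : Obj) : Prop :=
  match y with
  | .uri w => x = .uri w
  | .lit l => x = .lit l
  | .star => True
  | .plus => x = .uri uctx

/-- An edge with label `(t,u)` matches a link pattern in the context of `uctx`. -/
def lpMatch (lp : LinkPattern) (uctx : URI) (t : RDFTriple) (u : URI) : Prop :=
  ((lp.c1 = .star ∧ t.s = .uri u) ∨ (lp.c2 = .star ∧ t.p = u) ∨ (lp.c3 = .star ∧ t.o = .uri u))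
  ∧ matchSubj lp.c1 uctx t.s ∧ matchPred lp.c2 uctx t.p ∧ matchObj lp.c3 uctx t.o

/-! ### Solution mappings -/

abbrev Mapping := Var → Option Obj

def mdom (μ : Mapping) : Set Var := {v | μ v ≠ none}

def emptyMap : Mapping := fun _ => none

def single (v : Var) (o : Obj) : Mapping := fun w => if w = v then some o else none

def compatible (μ1 μ2 : Mapping) : Prop :=
  ∀ v a b, μ1 v = some a → μ2 v = some b → a = b

def munion (μ1 μ2 : Mapping) : Mapping := fun v =>
  match μ1 v with
  | some a => some a
  | none => μ2 v

/-- Join of two sets of solution mappings. -/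
def mjoin (Ω1 Ω2 : Set Mapping) : Set Mapping :=
  {μ | ∃ μ1 ∈ Ω1, ∃ μ2 ∈ Ω2, compatible μ1 μ2 ∧ μ = munion μ1 μ2}

/-- Restriction of a mapping to a finite set of variables. -/
def restrictV (V : Finset Var) (μ : Mapping) : Mapping := fun v =>
  if v ∈ V then μ v else none

/-! ### SPARQL graph patterns -/

inductive PTerm where
  | var (v : Var)
  | term (o : Obj)
deriving DecidableEq

structure TriplePattern where
  sj : PTerm
  pr : PTerm
  ob : PTerm
deriving DecidableEq

def PTerm.varsOf : PTerm → Set Var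
  | .var v => {v}
  | .term _ => ∅

def TriplePattern.varsOf (t : TriplePattern) : Set Var :=
  t.sj.varsOf ∪ t.pr.varsOf ∪ t.ob.varsOf

def pval (μ : Mapping) : PTerm → Option Obj
  | .var v => μ v
  | .term o => some o

def objToSubj : Obj → Option Subj
  | .uri u => some (.uri u)
  | .bnode b => some (.bnode b)
  | .lit _ => none

def objToURI : Obj → Option URI
  | .uri u => some u
  | _ => none

/-- `tpInst μ tp = some t` iff `μ[tp] = t` (all variables of `tp` bound by `μ`
and the instantiation is a well-formed RDF triple). -/
def tpInst (μ : Mapping) (t : TriplePattern) : Option RDFTriple := do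
  let s ← pval μ t.sj
  let s' ← objToSubj s
  let p ← pval μ t.pr
  let p' ← objToURI p
  let o ← pval μ t.ob
  return ⟨s', p', o⟩

/-- Filter conditions. -/
inductive Cond where
  | eq (a b : PTerm)
  | neq (a b : PTerm)
  | and (c1 c2 : Cond)
  | or (c1 c2 : Cond)
  | not (c : Cond)

def condHolds (μ : Mapping) : Cond → Prop
  | .eq a b => ∃ x, pval μ a = some x ∧ pval μ b = some x
  | .neq a b => ∃ x y, pval μ a = some x ∧ pval μ b = some y ∧ x ≠ y
  | .and c1 c2 => condHolds μ c1 ∧ condHolds μ c2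
  | .or c1 c2 => condHolds μ c1 ∨ condHolds μ c2
  | .not c => ¬ condHolds μ c

/-- SPARQL graph patterns, built from triple patterns with
AND, UNION, OPT, FILTER, GRAPH and BIND. -/
inductive GP where
  | empty
  | tp (t : TriplePattern)
  | and (g1 g2 : GP)
  | union (g1 g2 : GP)
  | opt (g1 g2 : GP)
  | filter (g : GP) (c : Cond)
  | graphU (u : URI) (g : GP)
  | graphV (v : Var) (g : GP)
  | bind (g : GP) (o : Obj) (v : Var)

/-- An RDF dataset: a default graph together with named graphs. -/
structure RDFDataset where
  dflt : Set RDFTriple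
  named : URI → Option (Set RDFTriple)

/-- Standard set-based SPARQL evaluation of a graph pattern over an RDF
dataset `D` with active graph `G`. -/
def evalGP (D : RDFDataset) : GP → Set RDFTriple → Set Mapping
  | .empty, _ => {emptyMap}
  | .tp t, G => {μ | mdom μ = t.varsOf ∧ ∃ tr ∈ G, tpInst μ t = some tr}
  | .and g1 g2, G => mjoin (evalGP D g1 G) (evalGP D g2 G)
  | .union g1 g2, G => evalGP D g1 G ∪ evalGP D g2 G
  | .opt g1 g2, G =>
      mjoin (evalGP D g1 G) (evalGP D g2 G) ∪
        {μ | μ ∈ evalGP D g1 G ∧ ∀ μ2 ∈ evalGP D g2 G, ¬ compatible μ μ2}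
  | .filter g c, G => {μ | μ ∈ evalGP D g G ∧ condHolds μ c}
  | .graphU u g, _ => {μ | ∃ G', D.named u = some G' ∧ μ ∈ evalGP D g G'}
  | .graphV v g, _ =>
      {μ | ∃ u G', D.named u = some G' ∧ ∃ μ' ∈ evalGP D g G',
            compatible μ' (single v (.uri u)) ∧ μ = munion μ' (single v (.uri u))}
  | .bind g o v, G => {μ' | ∃ μ ∈ evalGP D g G, μ v = none ∧ μ' = munion μ (single v o)}

/-! ### LDQL syntax -/

mutual
/-- LDQL queries. -/
inductive LDQL where
  | base (l : LPE) (P : GP)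
  | seedU (U0 : Finset URI) (q : LDQL)
  | seedV (v : Var) (q : LDQL)
  | qand (q1 q2 : LDQL)
  | qunion (q1 q2 : LDQL)
  | proj (V0 : Finset Var) (q : LDQL)

/-- Link path expressions. -/
inductive LPE where
  | eps
  | pat (lp : LinkPattern)
  | seq (l1 l2 : LPE)
  | alt (l1 l2 : LPE)
  | star (l : LPE)
  | test (l : LPE)
  | sub (v : Var) (q : LDQL)
end

/-- `dataset_W(U0)`. -/
def datasetW (W : Web) (U0 : Set URI) : RDFDataset where
  dflt := {t | ∃ u ∈ U0, ∃ d, W.adoc u = some d ∧ t ∈ W.data d}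
  named := fun u =>
    if u ∈ U0 then (W.adoc u).map (fun d => ((W.data d : Finset RDFTriple) : Set RDFTriple))
    else none

/-! ### LDQL semantics -/

mutual
/-- The S-based evaluation `⟦q⟧_W^S` of an LDQL query. -/
def evalQ (W : Web) : LDQL → Set URI → Set Mapping
  | .base l P, S =>
      evalGP (datasetW W {u' | ∃ u ∈ S, u' ∈ evalL W l u}) P
        (datasetW W {u' | ∃ u ∈ S, u' ∈ evalL W l u}).dflt
  | .seedU U0 q, _ => evalQ W q ↑U0
  | .seedV v q, _ => ⋃ u : URI, mjoin (evalQ W q {u}) {single v (.uri u)}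
  | .qand q1 q2, S => mjoin (evalQ W q1 S) (evalQ W q2 S)
  | .qunion q1 q2, S => evalQ W q1 S ∪ evalQ W q2 S
  | .proj V0 q, S => (restrictV V0) '' (evalQ W q S)

/-- The `uctx`-based evaluation `⟦l⟧_W^uctx` of a link path expression. -/
def evalL (W : Web) : LPE → URI → Set URI
  | .eps, u => if (W.adoc u).isSome then {u} else ∅
  | .pat lp, u =>
      {u' | ∃ d, W.adoc u = some d ∧ ∃ t d', W.edge d t u' d' ∧ lpMatch lp u t u'}
  | .seq l1 l2, u => {u'' | ∃ u', u' ∈ evalL W l1 u ∧ u'' ∈ evalL W l2 u'}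
  | .alt l1 l2, u => evalL W l1 u ∪ evalL W l2 u
  | .star l, u =>
      {u' | (W.adoc u).isSome ∧ Relation.ReflTransGen (fun a b => b ∈ evalL W l a) u u'}
  | .test l, u => {u' | u' = u ∧ evalL W l u ≠ ∅}
  | .sub v q, u =>
      {u' | (W.adoc u).isSome ∧ ∃ μ ∈ evalQ W q {u}, μ v = some (.uri u')}
end

/-- Semantic equivalence of LDQL queries. -/
def equivQ (q q' : LDQL) : Prop :=
  ∀ (W : Web) (S : Set URI), S.Finite → evalQ W q S = evalQ W q' S


/-! ### LPEs built only from ε, ⟨?v,q⟩ and (·)* -/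

mutual
/-- All LPEs occurring in the query consist only of `ε`, `⟨?v,q⟩` and `(·)*`. -/
def LDQL.simple : LDQL → Prop
  | .base l _ => l.simple
  | .seedU _ q => q.simple
  | .seedV _ q => q.simple
  | .qand q1 q2 => q1.simple ∧ q2.simple
  | .qunion q1 q2 => q1.simple ∧ q2.simple
  | .proj _ q => q.simple

/-- The LPE consists only of `ε`, `⟨?v,q⟩` and `(·)*`. -/
def LPE.simple : LPE → Prop
  | .eps => True
  | .pat _ => False
  | .seq _ _ => False
  | .alt _ _ => False
  | .star l => l.simple
  | .test _ => False
  | .sub _ q => q.simple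
end

/-! ### Property paths under context-based semantics -/

/-- Property path expressions. -/
inductive PP where
  | uri (p : URI)
  | neg (us : List URI)
  | seq (r1 r2 : PP)
  | alt (r1 r2 : PP)
  | star (r : PP)

/-- Terms allowed in PP-patterns: URIs, literals and variables. -/
inductive PPTerm where
  | uri (u : URI)
  | lit (l : LitId)
  | var (v : Var)

/-- The context selector `C_W`. -/
def CW (W : Web) (a : Obj) : Set RDFTriple :=
  {t | ∃ u d, a = .uri u ∧ W.adoc u = some d ∧ t ∈ W.data d ∧ t.s = .uri u}

/-- The RDF terms occurring in triples of documents of `W`. -/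
def termsW (W : Web) : Set Obj :=
  {a | ∃ d ∈ W.docs, ∃ t ∈ W.data d, a = t.s.toObj ∨ a = .uri t.p ∨ a = t.o}

/-- The binary relation on RDF terms induced by a PP expression under
context-based semantics. -/
def ppRel (W : Web) : PP → Obj → Obj → Prop
  | .uri p, a, b => ∃ s, objToSubj a = some s ∧ (⟨s, p, b⟩ : RDFTriple) ∈ CW W a
  | .neg us, a, b => ∃ p, p ∉ us ∧ ∃ s, objToSubj a = some s ∧ (⟨s, p, b⟩ : RDFTriple) ∈ CW W a
  | .seq r1 r2, a, b => ∃ m, ppRel W r1 a m ∧ ppRel W r2 m b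
  | .alt r1 r2, a, b => ppRel W r1 a b ∨ ppRel W r2 a b
  | .star r, a, b => (a = b ∧ a ∈ termsW W) ∨ Relation.TransGen (ppRel W r) a b

def PPTerm.toPval (μ : Mapping) : PPTerm → Option Obj
  | .uri u => some (.uri u)
  | .lit l => some (.lit l)
  | .var v => μ v

def ppVars (α β : PPTerm) : Set Var := {v | α = .var v ∨ β = .var v}

/-- The context-based evaluation `⟦(α,r,β)⟧_ctxt^W` of a PP-pattern. -/
def ctxtEvalPat (W : Web) (α : PPTerm) (r : PP) (β : PPTerm) : Set Mapping :=
  {μ | mdom μ = ppVars α β ∧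
    ∃ a b, α.toPval μ = some a ∧ β.toPval μ = some b ∧ ppRel W r a b}

/-- PP-based SPARQL queries. -/
inductive PPQ where
  | pat (α : PPTerm) (r : PP) (β : PPTerm)
  | and (R1 R2 : PPQ)
  | union (R1 R2 : PPQ)
  | opt (R1 R2 : PPQ)
  | filter (R : PPQ) (c : Cond)

/-- The context-based evaluation `⟦R⟧_ctxt^W` of a PP-based SPARQL query. -/
def evalPPQ (W : Web) : PPQ → Set Mapping
  | .pat α r β => ctxtEvalPat W α r β
  | .and R1 R2 => mjoin (evalPPQ W R1) (evalPPQ W R2)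
  | .union R1 R2 => evalPPQ W R1 ∪ evalPPQ W R2
  | .opt R1 R2 =>
      mjoin (evalPPQ W R1) (evalPPQ W R2) ∪
        {μ | μ ∈ evalPPQ W R1 ∧ ∀ μ2 ∈ evalPPQ W R2, ¬ compatible μ μ2}
  | .filter R c => {μ | μ ∈ evalPPQ W R ∧ condHolds μ c}

/-! ### NautiLOD -/

/-- NautiLOD expressions (without action rules). -/
inductive NLOD where
  | fwd (p : URI)
  | bwd (p : URI)
  | any
  | seq (n1 n2 : NLOD)
  | alt (n1 n2 : NLOD)
  | star (n : NLOD)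
  | ask (n : NLOD) (P : GP)

/-- Dataset used for evaluating an ASK pattern over the data of a single document. -/
def askDS (W : Web) (d : Doc) : RDFDataset :=
  ⟨((W.data d : Finset RDFTriple) : Set RDFTriple), fun _ => none⟩

/-- NautiLOD semantics `⟦n⟧_W^u`. -/
def nlEval (W : Web) : NLOD → URI → Set URI
  | .fwd p, u => {u' | ∃ d, W.adoc u = some d ∧ (⟨.uri u, p, .uri u'⟩ : RDFTriple) ∈ W.data d}
  | .bwd p, u => {u' | ∃ d, W.adoc u = some d ∧ (⟨.uri u', p, .uri u⟩ : RDFTriple) ∈ W.data d}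
  | .any, u => {u' | ∃ d q, W.adoc u = some d ∧ (⟨.uri u, q, .uri u'⟩ : RDFTriple) ∈ W.data d}
  | .seq n1 n2, u =>
      {u'' | ∃ u', u' ∈ nlEval W n1 u ∧ (W.adoc u').isSome ∧ u'' ∈ nlEval W n2 u'}
  | .alt n1 n2, u => nlEval W n1 u ∪ nlEval W n2 u
  | .star n, u =>
      {u' | Relation.ReflTransGen (fun a b => (W.adoc a).isSome ∧ b ∈ nlEval W n a) u u'}
  | .ask n P, u =>
      {u' | u' ∈ nlEval W n u ∧
        ∃ d, W.adoc u' = some d ∧ evalGP (askDS W d) P ((W.data d : Finset RDFTriple) : Set RDFTriple) ≠ ∅}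

/-! ### Variables occurring in patterns and NautiLOD expressions -/

def condHasVar (v : Var) : Cond → Prop
  | .eq a b => a = .var v ∨ b = .var v
  | .neq a b => a = .var v ∨ b = .var v
  | .and c1 c2 => condHasVar v c1 ∨ condHasVar v c2
  | .or c1 c2 => condHasVar v c1 ∨ condHasVar v c2
  | .not c => condHasVar v c

/-- The variable `v` occurs in the SPARQL graph pattern. -/
def gpHasVar (v : Var) : GP → Prop
  | .empty => False
  | .tp t => t.sj = .var v ∨ t.pr = .var v ∨ t.ob = .var v
  | .and g1 g2 => gpHasVar v g1 ∨ gpHasVar v g2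
  | .union g1 g2 => gpHasVar v g1 ∨ gpHasVar v g2
  | .opt g1 g2 => gpHasVar v g1 ∨ gpHasVar v g2
  | .filter g c => gpHasVar v g ∨ condHasVar v c
  | .graphU _ g => gpHasVar v g
  | .graphV w g => v = w ∨ gpHasVar v g
  | .bind g _ w => v = w ∨ gpHasVar v g

/-- The variable `v` occurs in the NautiLOD expression. -/
def nlodHasVar (v : Var) : NLOD → Prop
  | .fwd _ => False
  | .bwd _ => False
  | .any => False
  | .seq n1 n2 => nlodHasVar v n1 ∨ nlodHasVar v n2
  | .alt n1 n2 => nlodHasVar v n1 ∨ nlodHasVar v n2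
  | .star n => nlodHasVar v n
  | .ask n P => nlodHasVar v n ∨ gpHasVar v P

/-! ### Reachability-based query semantics -/

/-- A reachability criterion. -/
def ReachCrit := RDFTriple → URI → GP → Prop

def cAll : ReachCrit := fun _ _ _ => True

def cNone : ReachCrit := fun _ _ _ => False

/-- The list of triple patterns occurring in a SPARQL graph pattern. -/
def GP.tps : GP → List TriplePattern
  | .empty => []
  | .tp t => [t]
  | .and g1 g2 => g1.tps ++ g2.tps
  | .union g1 g2 => g1.tps ++ g2.tps
  | .opt g1 g2 => g1.tps ++ g2.tps
  | .filter g _ => g.tps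
  | .graphU _ g => g.tps
  | .graphV _ g => g.tps
  | .bind g _ _ => g.tps

def cMatch : ReachCrit := fun t _ P => ∃ (μ : Mapping) (tp : TriplePattern),
  tp ∈ P.tps ∧ tpInst μ tp = some t

/-- `(c,S,P)`-reachability of a document in `W`. -/
inductive Reachable (W : Web) (c : ReachCrit) (S : Set URI) (P : GP) : Doc → Prop where
  | seed (u : URI) (d : Doc) : u ∈ S → W.adoc u = some d → Reachable W c S P d
  | step (dsrc : Doc) (t : RDFTriple) (u : URI) (d : Doc) :
      Reachable W c S P dsrc → W.edge dsrc t u d → c t u P → Reachable W c S P d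

/-- The RDF graph consisting of all triples of all `(c,S,P)`-reachable documents. -/
def reachGraph (W : Web) (c : ReachCrit) (S : Set URI) (P : GP) : Set RDFTriple :=
  {t | ∃ d, Reachable W c S P d ∧ t ∈ W.data d}

/-- The S-based evaluation of `P` over `W` under `c`-semantics. -/
def reachEval (W : Web) (c : ReachCrit) (S : Set URI) (P : GP) : Set Mapping :=
  evalGP ⟨reachGraph W c S P, fun _ => none⟩ P (reachGraph W c S P)

/-! ### Constructions used in Theorems on c_Match and NautiLOD -/

def addFilter (v : Var) (pt : PTerm) (g : GP) : GP :=
  match pt with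
  | .var _ => g
  | .term o => .filter g (.eq (.var v) (.term o))

/-- The basic LDQL query `q_k = ⟨ε,P_k⟩` associated with a triple pattern. -/
def matchQ (vs vp vo : Var) (t : TriplePattern) : LDQL :=
  .base .eps (addFilter vo t.ob (addFilter vp t.pr (addFilter vs t.sj
    (.tp ⟨.var vs, .var vp, .var vo⟩))))

/-- An LPE whose evaluation is empty everywhere. -/
def emptyLPE (v : Var) : LPE := .sub v (.base .eps .empty)

/-- The LPE `l_Match` associated with a SPARQL graph pattern. -/
def lMatch (vs vp vo : Var) (P : GP) : LPE :=
  .star ((P.tps.map (fun t =>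
      LPE.alt (.sub vs (matchQ vs vp vo t))
        (LPE.alt (.sub vp (matchQ vs vp vo t)) (.sub vo (matchQ vs vp vo t))))).foldr
    LPE.alt (emptyLPE vs))

/-- The translation `trans_N` from NautiLOD expressions to LPEs, using the
(fresh, pairwise distinct) variables `vx`, `vu`, `vp`. -/
def transN (vx vu vp : Var) : NLOD → LPE
  | .fwd p => .pat ⟨.plus, .uri p, .star⟩
  | .bwd p => .pat ⟨.star, .uri p, .plus⟩
  | .any => .sub vx (.base .eps (.graphV vu (.tp ⟨.var vu, .var vp, .var vx⟩)))
  | .seq n1 n2 => .seq (transN vx vu vp n1) (transN vx vu vp n2)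
  | .alt n1 n2 => .alt (transN vx vu vp n1) (transN vx vu vp n2)
  | .star n => .star (transN vx vu vp n)
  | .ask n P => .seq (transN vx vu vp n) (.test (.sub vx (.base .eps (.graphV vx P))))


/-! ### Auxiliary counterexample web -/

/-- Counterexample web: document 0 contains `(0, p, 1)`, document 1 contains
`(2, 2, 2)`, document 2 is empty; `adoc u = u` for `u ≤ 2`. -/
def Wp (p : URI) : Web where
  docs := {0, 1, 2}
  finite_docs := (Set.finite_singleton 2).insert 1 |>.insert 0
  data := fun d =>
    if d = 0 then {⟨.uri 0, p, .uri 1⟩}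
    else if d = 1 then {⟨.uri 2, 2, .uri 2⟩}
    else ∅
  adoc := fun u =>
    match u with
    | 0 => some 0
    | 1 => some 1
    | 2 => some 2
    | _ => none
  adoc_mem := by
    intro u d h
    rcases u with _ | _ | _ | u <;> simp_all
  adoc_surj := by
    intro d hd
    simp only [Set.mem_insert_iff, Set.mem_singleton_iff] at hd
    rcases hd with rfl | rfl | rfl
    · exact ⟨0, rfl⟩
    · exact ⟨1, rfl⟩
    · exact ⟨2, rfl⟩

lemma Wp_good (p : URI) (n : NLOD) :
    ∀ u, (u = 0 ∨ u = 1) → ∀ u' ∈ nlEval (Wp p) n u, (u' = 0 ∨ u' = 1) := by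
  induction n with
  | fwd q =>
    rintro u hu u' ⟨d, hd, ht⟩
    rcases hu with rfl | rfl
    · simp [Wp] at hd; subst hd; simp [Wp] at ht; exact Or.inr ht.2
    · simp [Wp] at hd; subst hd; simp [Wp] at ht
  | bwd q =>
    rintro u hu u' ⟨d, hd, ht⟩
    rcases hu with rfl | rfl
    · simp [Wp] at hd; subst hd; simp [Wp] at ht
    · simp [Wp] at hd; subst hd; simp [Wp] at ht
  | any =>
    rintro u hu u' ⟨d, q, hd, ht⟩
    rcases hu with rfl | rfl
    · simp [Wp] at hd; subst hd; simp [Wp] at ht; exact Or.inr ht.2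
    · simp [Wp] at hd; subst hd; simp [Wp] at ht
  | seq n1 n2 ih1 ih2 =>
    rintro u hu u' ⟨u'', h1, _, h2⟩
    exact ih2 u'' (ih1 u hu u'' h1) u' h2
  | alt n1 n2 ih1 ih2 =>
    rintro u hu u' (h | h)
    · exact ih1 u hu u' h
    · exact ih2 u hu u' h
  | star n ih =>
    rintro u hu u' h
    simp only [nlEval, Set.mem_setOf_eq] at h
    induction h with
    | refl => exact hu
    | tail _ hstep ih2 => exact ih _ ih2 _ hstep.2
  | ask n P ih =>
    rintro u hu u' ⟨h, _⟩
    exact ih u hu u' h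

/-- The LDQL query `⟨⟨+,p,*⟩,(?x,?x,?x)⟩` is not equivalent
to any NautiLOD expression. -/
theorem LDQL_not_expressible_in_NautiLOD (p : URI) (x : Var) :
    ¬ ∃ n : NLOD, ∀ (W : Web) (u u' : URI), (W.adoc u).isSome →
        (u' ∈ nlEval W n u ↔
          single x (.uri u') ∈
            evalQ W (.base (.pat ⟨.plus, .uri p, .star⟩)
              (.tp ⟨.var x, .var x, .var x⟩)) {u}) := by
  rintro ⟨n, hn⟩
  have hdom : ((Wp p).adoc 0).isSome := by simp [Wp]
  have h := (hn (Wp p) 0 2 hdom).mpr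
  have hmem : single x (Obj.uri 2) ∈
      evalQ (Wp p) (.base (.pat ⟨.plus, .uri p, .star⟩)
        (.tp ⟨.var x, .var x, .var x⟩)) {0} := by
    rw [evalQ]
    constructor
    · -- mdom (single x (.uri 2)) = varsOf
      ext v
      simp only [mdom, single, TriplePattern.varsOf, PTerm.varsOf,
        Set.mem_setOf_eq, Set.union_self, Set.mem_singleton_iff]
      split <;> simp_all
    · refine ⟨⟨Subj.uri 2, 2, Obj.uri 2⟩, ?_, ?_⟩
      · -- the triple (2,2,2) is in the default graph of the dataset
        refine ⟨1, ⟨0, rfl, ?_⟩, 1, by simp [Wp], by simp [Wp]⟩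
        -- 1 ∈ ⟦⟨+,p,*⟩⟧^0
        rw [evalL]
        refine ⟨0, by simp [Wp], ⟨Subj.uri 0, p, Obj.uri 1⟩, 1, ?_, ?_⟩
        · exact ⟨by simp [Wp, Set.mem_insert_iff], by simp [Wp],
            Or.inr (Or.inr rfl), by simp [Wp]⟩
        · exact ⟨Or.inr (Or.inr ⟨rfl, rfl⟩), rfl, rfl, trivial⟩
      · simp [tpInst, pval, single, objToSubj, objToURI]
  have h2 := Wp_good p n 0 (Or.inl rfl) 2 (h hmem)
  rcases h2 with h2 | h2 <;> exact absurd h2 (by decide)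

end

end LDQLFormal
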